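/- For every integer t ≥ 3 and every integer n, the number of triples (x,y,z) ∈ (ℤ/2^tℤ)³ with x² + y² + z² = n equals: 0 if n ≡ 7 (mod 8); 2^{2t} if n ≡ 3 (mod 8); and 3·2^{2t−1} if n ≡ 1 or 2 (mod 4). -/

import Mathlib

/-!
Write `Q(x, y, z) = x² + y² + z²`. Reduction `(ℤ/2^(t+1))³ → (ℤ/2^t)³` is 8-to-1, and the points
upstairs lying over solutions of `Q = n` mod `2^t` are the solutions of `Q = n` and of `Q = n + 2^t`
mod `2^(t+1)`; so these two counts add up to eight times the count mod `2^t`. If `4 ∤ n`, every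
solution has an odd coordinate `x`, and for `t ≥ 3` the shift `x ↦ x + 2^(t-1)` changes `Q` by
exactly `2^t` mod `2^(t+1)`, so the two counts are equal. Hence the count is multiplied by `4` at
each step from `t = 3` on, and the values for `t = 3` are computed directly.
-/

/-- The number of solutions `(x,y,z)` in `ℤ/2^tℤ` of `x² + y² + z² = n`. -/
noncomputable def cntS (t : ℕ) (n : ℤ) : ℕ :=
  Nat.card {v : ZMod (2 ^ t) × ZMod (2 ^ t) × ZMod (2 ^ t) |
    v.1 ^ 2 + v.2.1 ^ 2 + v.2.2 ^ 2 = (n : ZMod (2 ^ t))}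

open Finset

theorem AddMonoidHom.card_filter_comp_mul_card {G H : Type*} [AddGroup G] [Fintype G]
    [AddGroup H] [Fintype H] [DecidableEq H] (f : G →+ H) (hf : Function.Surjective f)
    (p : H → Prop) [DecidablePred p] :
    #{g | p (f g)} * Fintype.card H = Fintype.card G * #{h | p h} := by
  have hfiber (h : H) : #{g | f g = h} = #{g | f g = 0} :=
    AddMonoidHom.card_fiber_eq_of_mem_range f (hf h) ⟨0, map_zero f⟩
  have hcount (q : H → Prop) [DecidablePred q] : #{g | q (f g)} = #{g | f g = 0} * #{h | q h} := by
    rw [card_eq_sum_card_fiberwise (f := f) (t := {h | q h}) (fun g hg => by simpa using hg),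
      sum_congr rfl fun h hh => ?_, sum_const, smul_eq_mul, mul_comm]
    rw [← hfiber h]
    congr 1
    ext g
    simp only [mem_filter, mem_univ, true_and, and_iff_right_iff_imp]
    rintro rfl
    simpa using hh
  have hG := hcount fun _ => True
  simp only [filter_true, card_univ] at hG
  rw [hcount p, hG]
  ring

theorem ZMod.castHom_eq_castHom_iff_of_eq_two_mul {N m : ℕ} [NeZero m] (hN : N = 2 * m)
    (hdvd : m ∣ N) (x y : ZMod N) :
    castHom hdvd (ZMod m) x = castHom hdvd (ZMod m) y ↔ x = y ∨ x = y + m := by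
  subst hN
  rw [← sub_eq_zero, ← map_sub, ← sub_eq_zero (a := x), ← sub_eq_iff_eq_add']
  generalize x - y = z
  have hm : m < 2 * m := by have := NeZero.pos m; omega
  rw [castHom_apply, cast_eq_val, natCast_eq_zero_iff, ← val_eq_zero,
    ← (val_injective _).eq_iff, val_cast_of_lt hm]
  have hz := z.val_lt
  constructor
  · rintro ⟨k, hk⟩
    have : k < 2 := by nlinarith
    interval_cases k <;> simp [hk]
  · rintro (h | h) <;> simp [h]

theorem ZMod.even_or_odd {N : ℕ} (x : ZMod N) : Even x ∨ Odd x := by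
  obtain ⟨a, rfl⟩ := ZMod.intCast_surjective x
  exact a.even_or_odd.imp Even.intCast Odd.intCast

theorem add_two_pow_pred_sq_of_odd {R : Type*} [CommRing R] {t : ℕ} (ht : 3 ≤ t)
    (h : (2 : R) ^ (t + 1) = 0) {x : R} (hx : Odd x) :
    (x + 2 ^ (t - 1)) ^ 2 = x ^ 2 + 2 ^ t := by
  obtain ⟨k, rfl⟩ := hx
  obtain ⟨s, rfl⟩ : ∃ s, t = s + 3 := ⟨t - 3, by omega⟩
  rw [show s + 3 - 1 = s + 2 by omega]
  linear_combination (k + 2 ^ s) * h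

section ThreeSquares

variable {R : Type*}

def sumThreeSq [Semiring R] (v : R × R × R) : R := v.1 ^ 2 + v.2.1 ^ 2 + v.2.2 ^ 2

theorem map_sumThreeSq {S : Type*} [Semiring R] [Semiring S] (f : R →+* S) (v : R × R × R) :
    f (sumThreeSq v) = sumThreeSq (Prod.map f (Prod.map f f) v) := by
  simp only [sumThreeSq, map_add, map_pow, Prod.map_fst, Prod.map_snd]

theorem four_dvd_sumThreeSq [CommRing R] {v : R × R × R} (h₁ : Even v.1) (h₂ : Even v.2.1)
    (h₃ : Even v.2.2) : 4 ∣ sumThreeSq v := by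
  obtain ⟨a, ha⟩ := h₁
  obtain ⟨b, hb⟩ := h₂
  obtain ⟨c, hc⟩ := h₃
  exact ⟨a ^ 2 + b ^ 2 + c ^ 2, by rw [sumThreeSq, ha, hb, hc]; ring⟩

open scoped Classical in
noncomputable def shiftFirstOdd [Semiring R] (d : R) (v : R × R × R) : R × R × R :=
  if Odd v.1 then (v.1 + d, v.2)
  else if Odd v.2.1 then (v.1, v.2.1 + d, v.2.2)
  else (v.1, v.2.1, v.2.2 + d)

theorem odd_add_iff_of_even [Ring R] {d : R} (hd : Even d) (x : R) : Odd (x + d) ↔ Odd x :=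
  ⟨fun h => by simpa using h.sub_even hd, fun h => h.add_even hd⟩

theorem shiftFirstOdd_neg_shiftFirstOdd [Ring R] {d : R} (hd : Even d) (v : R × R × R) :
    shiftFirstOdd (-d) (shiftFirstOdd d v) = v := by
  have hpar := odd_add_iff_of_even hd
  obtain ⟨a, b, c⟩ := v
  by_cases ha : Odd a
  · simp [shiftFirstOdd, ha, hpar]
  by_cases hb : Odd b
  · simp [shiftFirstOdd, ha, hb, hpar]
  · simp [shiftFirstOdd, ha, hb]

theorem sumThreeSq_shiftFirstOdd [CommRing R] {t : ℕ} (ht : 3 ≤ t) (h : (2 : R) ^ (t + 1) = 0)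
    {v : R × R × R} (hv : Odd v.1 ∨ Odd v.2.1 ∨ Odd v.2.2) :
    sumThreeSq (shiftFirstOdd (2 ^ (t - 1)) v) = sumThreeSq v + 2 ^ t := by
  unfold shiftFirstOdd
  split_ifs with h₁ h₂
  · rw [sumThreeSq, sumThreeSq, add_two_pow_pred_sq_of_odd ht h h₁]; ring
  · rw [sumThreeSq, sumThreeSq, add_two_pow_pred_sq_of_odd ht h h₂]; ring
  · have h₃ : Odd v.2.2 := (hv.resolve_left h₁).resolve_left h₂
    rw [sumThreeSq, sumThreeSq, add_two_pow_pred_sq_of_odd ht h h₃]; ring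

theorem card_sumThreeSq_eq_le [CommRing R] [Fintype R] [DecidableEq R] {t : ℕ} (ht : 3 ≤ t)
    (h : (2 : R) ^ (t + 1) = 0) {m : R}
    (hm : ∀ v : R × R × R, sumThreeSq v = m → Odd v.1 ∨ Odd v.2.1 ∨ Odd v.2.2) :
    #{v : R × R × R | sumThreeSq v = m} ≤ #{v : R × R × R | sumThreeSq v = m + 2 ^ t} := by
  have hd : Even (2 ^ (t - 1) : R) := even_two.pow_of_ne_zero (by omega)
  refine card_le_card_of_injOn (shiftFirstOdd (2 ^ (t - 1))) (fun v hv => ?_) ?_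
  · simp only [coe_filter, mem_univ, true_and, Set.mem_ofPred_eq] at hv ⊢
    rw [sumThreeSq_shiftFirstOdd ht h (hm v hv), hv]
  · exact (Function.LeftInverse.injective (shiftFirstOdd_neg_shiftFirstOdd hd)).injOn

end ThreeSquares

theorem cntS_eq_card (t : ℕ) (n : ℤ) :
    cntS t n = #{v : ZMod (2 ^ t) × ZMod (2 ^ t) × ZMod (2 ^ t) | sumThreeSq v = n} := by
  rw [cntS, Nat.card_eq_fintype_card, ← Fintype.card_subtype]
  rfl

theorem odd_or_odd_or_odd_of_castHom_ne_zero {N : ℕ} (h4 : 4 ∣ N) {v : ZMod N × ZMod N × ZMod N}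
    (hv : ZMod.castHom h4 (ZMod 4) (sumThreeSq v) ≠ 0) : Odd v.1 ∨ Odd v.2.1 ∨ Odd v.2.2 := by
  by_contra! h
  obtain ⟨h₁, h₂, h₃⟩ := h
  have h4v := map_dvd (ZMod.castHom h4 (ZMod 4))
    (four_dvd_sumThreeSq ((ZMod.even_or_odd _).resolve_right h₁)
      ((ZMod.even_or_odd _).resolve_right h₂) ((ZMod.even_or_odd _).resolve_right h₃))
  rw [map_ofNat, show (4 : ZMod 4) = 0 from rfl, zero_dvd_iff] at h4v
  exact hv h4v

theorem card_sumThreeSq_add_card_sumThreeSq_add_two_pow (t : ℕ) (n : ℤ) :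
    #{v | sumThreeSq v = (n : ZMod (2 ^ (t + 1)))} +
      #{v | sumThreeSq v = (n : ZMod (2 ^ (t + 1))) + 2 ^ t} = 8 * cntS t n := by
  have hdvd : 2 ^ t ∣ 2 ^ (t + 1) := pow_dvd_pow 2 t.le_succ
  let π := ZMod.castHom hdvd (ZMod (2 ^ t))
  let π₃ := π.toAddMonoidHom.prodMap (π.toAddMonoidHom.prodMap π.toAddMonoidHom)
  have hπ := ZMod.castHom_surjective hdvd
  have hfiber (v : ZMod (2 ^ (t + 1)) × ZMod (2 ^ (t + 1)) × ZMod (2 ^ (t + 1))) :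
      sumThreeSq (π₃ v) = n ↔ sumThreeSq v = n ∨ sumThreeSq v = n + 2 ^ t := by
    rw [← map_intCast π, show π₃ v = Prod.map π (Prod.map π π) v from rfl, ← map_sumThreeSq,
      ZMod.castHom_eq_castHom_iff_of_eq_two_mul (pow_succ' 2 t), Nat.cast_pow, Nat.cast_ofNat]
  have h2t : (2 : ZMod (2 ^ (t + 1))) ^ t ≠ 0 := by
    have : ((2 ^ t : ℕ) : ZMod (2 ^ (t + 1))) ≠ 0 := by
      rw [Ne, ZMod.natCast_eq_zero_iff, Nat.pow_dvd_pow_iff_le_right one_lt_two]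
      omega
    exact_mod_cast this
  have hdisj : Disjoint (α := Finset _) {v | sumThreeSq v = (n : ZMod (2 ^ (t + 1)))}
      {v | sumThreeSq v = (n : ZMod (2 ^ (t + 1))) + 2 ^ t} :=
    disjoint_filter.2 fun v _ h₁ h₂ => h2t (by rwa [h₁, left_eq_add] at h₂)
  have hcard := π₃.card_filter_comp_mul_card (hπ.prodMap (hπ.prodMap hπ))
    fun w => sumThreeSq w = (n : ZMod (2 ^ t))
  simp only [hfiber, Fintype.card_prod, ZMod.card, filter_or, card_union_of_disjoint hdisj] at hcard
  rw [cntS_eq_card]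
  refine Nat.eq_of_mul_eq_mul_right (by positivity) (hcard.trans ?_)
  ring

theorem card_sumThreeSq_add_two_pow {t : ℕ} (ht : 3 ≤ t) {n : ℤ} (hn : ¬(4 : ℤ) ∣ n) :
    #{v | sumThreeSq v = (n : ZMod (2 ^ (t + 1))) + 2 ^ t} =
      #{v | sumThreeSq v = (n : ZMod (2 ^ (t + 1)))} := by
  have h4 : 4 ∣ 2 ^ (t + 1) := pow_dvd_pow 2 (by omega : 2 ≤ t + 1)
  let ρ := ZMod.castHom h4 (ZMod 4)
  have h2 : (2 : ZMod (2 ^ (t + 1))) ^ (t + 1) = 0 := by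
    exact_mod_cast ZMod.natCast_self (2 ^ (t + 1))
  have hρn : ρ n ≠ 0 := by
    rwa [map_intCast, Ne, ← Nat.cast_ofNat, ZMod.intCast_zmod_eq_zero_iff_dvd]
  have hρ2 : ρ (2 ^ t) = 0 := by
    obtain ⟨s, rfl⟩ : ∃ s, t = s + 2 := ⟨t - 2, by omega⟩
    rw [map_pow, map_ofNat, pow_add, show (2 : ZMod 4) ^ 2 = 0 from rfl, mul_zero]
  have hle := card_sumThreeSq_eq_le ht h2 fun v hv =>
    odd_or_odd_or_odd_of_castHom_ne_zero h4 (hv ▸ hρn)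
  have hge := card_sumThreeSq_eq_le ht h2 (m := n + 2 ^ t) fun v hv =>
    odd_or_odd_or_odd_of_castHom_ne_zero h4 (by rwa [hv, map_add, hρ2, add_zero])
  rw [add_assoc, ← two_mul, ← pow_succ', h2, add_zero] at hge
  exact hge.antisymm hle

theorem cntS_succ {t : ℕ} (ht : 3 ≤ t) {n : ℤ} (hn : ¬(4 : ℤ) ∣ n) :
    cntS (t + 1) n = 4 * cntS t n := by
  have h := card_sumThreeSq_add_card_sumThreeSq_add_two_pow t n
  rw [card_sumThreeSq_add_two_pow ht hn] at h
  rw [cntS_eq_card]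
  omega

theorem cntS_three_emod (n : ℤ) : cntS 3 n = cntS 3 (n % 8) := by
  rw [cntS_eq_card, cntS_eq_card, ← ZMod.intCast_mod n (2 ^ 3)]
  rfl

set_option maxRecDepth 10000 in
theorem cntS_three_values :
    cntS 3 1 = 96 ∧ cntS 3 2 = 96 ∧ cntS 3 3 = 64 ∧ cntS 3 5 = 96 ∧ cntS 3 6 = 96 ∧
      cntS 3 7 = 0 := by
  simp only [cntS_eq_card]
  decide

theorem cntS_eq_four_pow_mul {t : ℕ} (ht : 3 ≤ t) {n : ℤ} (hn : ¬(4 : ℤ) ∣ n) :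
    cntS t n = 4 ^ (t - 3) * cntS 3 (n % 8) := by
  induction t, ht using Nat.le_induction with
  | base => rw [cntS_three_emod, Nat.sub_self, pow_zero, one_mul]
  | succ t ht ih => rw [cntS_succ ht hn, ih, show t + 1 - 3 = t - 3 + 1 by omega, pow_succ]; ring

theorem dyadic_count_three_squares (t : ℕ) (ht : 3 ≤ t) (n : ℤ) :
    (n % 8 = 7 → cntS t n = 0) ∧
    (n % 8 = 3 → (cntS t n : ℤ) = 2 ^ (2 * t)) ∧
    (n % 4 = 1 ∨ n % 4 = 2 → (cntS t n : ℤ) = 3 * 2 ^ (2 * t - 1)) := by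
  obtain ⟨h1, h2, h3, h5, h6, h7⟩ := cntS_three_values
  obtain ⟨s, rfl⟩ : ∃ s, t = s + 3 := ⟨t - 3, by omega⟩
  have hcnt (hn : ¬(4 : ℤ) ∣ n) : (cntS (s + 3) n : ℤ) = 4 ^ s * cntS 3 (n % 8) := by
    have h := cntS_eq_four_pow_mul (by omega) hn
    rw [Nat.add_sub_cancel] at h
    exact_mod_cast h
  have hpow : (4 : ℤ) ^ s = 2 ^ (2 * s) := by rw [pow_mul]; norm_num
  refine ⟨fun h => ?_, fun h => ?_, fun h => ?_⟩
  · rw [cntS_eq_four_pow_mul (by omega) (by omega), h, h7, mul_zero]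
  · rw [hcnt (by omega), h, h3, hpow]
    ring
  · have h96 : cntS 3 (n % 8) = 96 := by
      rcases (by omega : n % 8 = 1 ∨ n % 8 = 2 ∨ n % 8 = 5 ∨ n % 8 = 6) with h | h | h | h <;>
        rw [h] <;> assumption
    rw [hcnt (by omega), h96, hpow, show 2 * (s + 3) - 1 = 2 * s + 5 by omega]
    push_cast
    ring
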